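/- arXiv:2601.00111 — 3 statements merged into one kernel-verified Lean document; each statement's English description precedes it below -/
import Mathlib

section
/- Let χ > 1 be the unique solution of χ ln χ = χ + 1. Then for all real s with 0 ≤ s ≤ l/χ and all integers l ≥ 1, one has (es/l)^l ≤ e^{χ s − l}·c for a universal constant c > 0; in particular the function f(χ) = 2χ²/(χ−1) evaluated at this χ is approximately 9.954. -/
open Real

-- lower bound: exp x ≥ cubic Taylor sum, for 0 ≤ x
lemma exp_ge_cubic {x : ℝ} (hx : 0 ≤ x) :
    1 + x + x^2/2 + x^3/6 ≤ Real.exp x := by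
  have h := Real.sum_le_exp_of_nonneg hx 4
  simp [Finset.sum_range_succ, Nat.factorial] at h
  nlinarith [h]

lemma exp_le_quartic {x : ℝ} (h1 : 0 ≤ x) (h2 : x ≤ 1) :
    Real.exp x ≤ 1 + x + x^2/2 + x^3/6 + 5 * x^4 / 96 := by
  have h := Real.exp_bound' h1 h2 (n := 4) (by norm_num)
  simp [Finset.sum_range_succ, Nat.factorial] at h
  nlinarith [h]

/-- If `χ > 1` solves `χ ln χ = χ + 1`, then there is a universal constant `c > 0`
such that `(e s / l)^l ≤ c e^{χ s − l}` for all `0 ≤ s ≤ l / χ` and integers `l ≥ 1`;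
moreover `2χ²/(χ−1) ≈ 9.954`. -/
theorem stmt_9 :
    ∃ c : ℝ, 0 < c ∧ ∀ χ : ℝ, 1 < χ → χ * Real.log χ = χ + 1 →
      (∀ (l : ℕ) (s : ℝ), 1 ≤ l → 0 ≤ s → s ≤ (l : ℝ) / χ →
        (Real.exp 1 * s / l) ^ l ≤ c * Real.exp (χ * s - l)) ∧
      |2 * χ ^ 2 / (χ - 1) - 9.954| < 0.01 := by
  refine ⟨1, one_pos, fun χ hχ heq => ?_⟩
  have hχ0 : (0:ℝ) < χ := by linarith
  have hlog : Real.log χ = 1 + 1/χ := by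
    field_simp
    linarith [heq]
  constructor
  · intro l s hl hs hsl
    have hl0 : (0:ℝ) < (l:ℝ) := by exact_mod_cast Nat.pos_of_ne_zero (by omega)
    rcases eq_or_lt_of_le hs with h0 | h0
    · rw [← h0]
      rw [mul_zero, zero_div, zero_pow (by omega)]
      positivity
    · -- s > 0
      have key : Real.log (s / l) + 2 ≤ χ * (s / l) := by
        set t := s / l with ht
        have ht0 : 0 < t := div_pos h0 hl0
        have h1 : Real.log (χ * t) ≤ χ * t - 1 :=
          Real.log_le_sub_one_of_pos (mul_pos hχ0 ht0)
        rw [Real.log_mul (ne_of_gt hχ0) (ne_of_gt ht0), hlog] at h1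
        have : 0 < 1/χ := by positivity
        linarith
      have hbase : 0 < Real.exp 1 * s / l := by positivity
      have : (Real.exp 1 * s / l) ^ l = Real.exp (l * Real.log (Real.exp 1 * s / l)) := by
        rw [← Real.log_pow, Real.exp_log (pow_pos hbase l)]
      rw [this, one_mul]
      apply Real.exp_le_exp.mpr
      have hlogval : Real.log (Real.exp 1 * s / l) = 1 + Real.log (s / l) := by
        rw [mul_div_assoc, Real.log_mul (Real.exp_ne_zero 1) (ne_of_gt (div_pos h0 hl0)),
          Real.log_exp]
      rw [hlogval]
      have := mul_le_mul_of_nonneg_left key (le_of_lt hl0)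
      have hst : (l:ℝ) * (χ * (s / l)) = χ * s := by field_simp
      nlinarith [this]
  · -- numeric bounds
    have ee1 : (2.7182818283 : ℝ) < Real.exp 1 := Real.exp_one_gt_d9
    have ee2 : Real.exp 1 < 2.7182818286 := Real.exp_one_lt_d9
    have hlow : (3.586 : ℝ) < χ := by
      by_contra h
      push_neg at h
      have h1 : 1 + 1/(3.586:ℝ) ≤ Real.log χ := by
        rw [hlog]
        have : (1:ℝ)/3.586 ≤ 1/χ := by
          apply one_div_le_one_div_of_le hχ0 h
        linarith
      have h2 : Real.exp (1 + 1/(3.586:ℝ)) ≤ χ := by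
        calc Real.exp (1 + 1/(3.586:ℝ)) ≤ Real.exp (Real.log χ) := Real.exp_le_exp.mpr h1
          _ = χ := Real.exp_log hχ0
      have h3 : Real.exp (1 + 1/(3.586:ℝ)) = Real.exp 1 * Real.exp (1/3.586) :=
        Real.exp_add 1 _
      have h4 := exp_ge_cubic (x := 1/3.586) (by norm_num)
      nlinarith [h2, h3, h4, ee1, Real.exp_pos (1/(3.586:ℝ))]
    have hhigh : χ < 3.596 := by
      by_contra h
      push_neg at h
      have h1 : Real.log χ ≤ 1 + 1/(3.596:ℝ) := by
        rw [hlog]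
        have : (1:ℝ)/χ ≤ 1/3.596 := by
          apply one_div_le_one_div_of_le (by norm_num) h
        linarith
      have h2 : χ ≤ Real.exp (1 + 1/(3.596:ℝ)) := by
        calc χ = Real.exp (Real.log χ) := (Real.exp_log hχ0).symm
          _ ≤ _ := Real.exp_le_exp.mpr h1
      have h3 : Real.exp (1 + 1/(3.596:ℝ)) = Real.exp 1 * Real.exp (1/3.596) :=
        Real.exp_add 1 _
      have h4 := exp_le_quartic (x := 1/3.596) (by norm_num) (by norm_num)
      nlinarith [h2, h3, h4, ee2, Real.exp_pos (1/(3.596:ℝ))]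
    have hχ1 : (0:ℝ) < χ - 1 := by linarith
    rw [abs_lt]
    constructor
    · rw [lt_sub_iff_add_lt, lt_div_iff₀ hχ1]
      nlinarith
    · rw [sub_lt_iff_lt_add, div_lt_iff₀ hχ1]
      nlinarith
end

section
/- Let A be a nonnegative n×n matrix (entrywise) and let x : [0,∞) → ℝ^n be C¹ with x(t) ≥ 0 entrywise and x'(t) ≤ A x(t) entrywise for all t. Then x(t) ≤ e^{tA} x(0) entrywise for all t ≥ 0. -/
/-! For fixed `T ≥ 0` consider `g s = e^{(T - s) A} x(s)`. Its derivative is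
`e^{(T - s) A} (x'(s) - A x(s))`, which is entrywise nonpositive on `[0, T]` because
`e^{(T - s) A} = ∑ (T - s)^m A^m / m!` is entrywise nonnegative there. Hence every entry of `g`
decreases on `[0, T]`, and `x(T) = g T ≤ g 0 = e^{T A} x(0)`. -/

open Matrix NormedSpace

namespace Matrix

variable {ι : Type*} [Fintype ι] [DecidableEq ι]

-- Matrices carry no canonical norm; the `L∞` operator norm is chosen inside the proofs only to
-- reach the exponential series and the derivative of `exp`.

lemma exp_apply_nonneg {B : Matrix ι ι ℝ} (hB : ∀ i j, 0 ≤ B i j) (i j : ι) :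
    0 ≤ exp B i j := by
  let : NormedRing (Matrix ι ι ℝ) := Matrix.linftyOpNormedRing
  let : NormedAlgebra ℝ (Matrix ι ι ℝ) := Matrix.linftyOpNormedAlgebra
  have hs : HasSum (fun m : ℕ => (m.factorial : ℝ)⁻¹ • B ^ m) (exp B) := exp_series_hasSum_exp' B
  exact (Pi.hasSum.mp (Pi.hasSum.mp hs i) j).nonneg fun m =>
    mul_nonneg (by positivity) (pow_apply_nonneg hB m i j)

lemma hasDerivAt_exp_smul_apply (A : Matrix ι ι ℝ) (t : ℝ) (i j : ι) :
    HasDerivAt (fun s : ℝ => exp (s • A) i j) ((exp (t • A) * A) i j) t := by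
  let : NormedRing (Matrix ι ι ℝ) := Matrix.linftyOpNormedRing
  let : NormedAlgebra ℝ (Matrix ι ι ℝ) := Matrix.linftyOpNormedAlgebra
  exact (entryLinearMap ℝ ℝ i j).toContinuousLinearMap.hasFDerivAt.comp_hasDerivAt t
    (hasDerivAt_exp_smul_const A t)

lemma hasDerivAt_exp_sub_smul_mulVec_apply (A : Matrix ι ι ℝ) (T : ℝ) {x : ℝ → ι → ℝ}
    {v : ι → ℝ} {s : ℝ} (hx : ∀ k, HasDerivAt (fun s => x s k) (v k) s) (j : ι) :
    HasDerivAt (fun s => (exp ((T - s) • A) *ᵥ x s) j)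
      ((exp ((T - s) • A) *ᵥ v) j - (exp ((T - s) • A) *ᵥ (A *ᵥ x s)) j) s := by
  have hE : ∀ k, HasDerivAt (fun s => exp ((T - s) • A) j k)
      (-(exp ((T - s) • A) * A) j k) s := fun k => by
    simpa [Function.comp_def] using
      (hasDerivAt_exp_smul_apply A (T - s) j k).scomp s ((hasDerivAt_id s).const_sub T)
  refine (HasDerivAt.fun_sum (u := Finset.univ) fun k _ => (hE k).mul (hx k)).congr_deriv ?_
  rw [mulVec_mulVec]
  simp only [mulVec, dotProduct, ← Finset.sum_sub_distrib]
  exact Finset.sum_congr rfl fun k _ => by ring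

lemma antitoneOn_exp_sub_smul_mulVec_apply {A : Matrix ι ι ℝ} (hA : ∀ i j, 0 ≤ A i j) {T : ℝ}
    {x x' : ℝ → ι → ℝ} (hderiv : ∀ j t, HasDerivAt (fun s => x s j) (x' t j) t)
    (hineq : ∀ t ∈ Set.Ioo 0 T, x' t ≤ A *ᵥ x t) (j : ι) :
    AntitoneOn (fun s => (exp ((T - s) • A) *ᵥ x s) j) (Set.Icc 0 T) := by
  have hg := fun s => hasDerivAt_exp_sub_smul_mulVec_apply A T (hderiv · s) j
  refine antitoneOn_of_hasDerivWithinAt_nonpos (convex_Icc 0 T)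
    (fun s _ => (hg s).continuousAt.continuousWithinAt) (fun s _ => (hg s).hasDerivWithinAt) ?_
  intro s hs
  rw [interior_Icc] at hs
  have hexp : ∀ i k, 0 ≤ exp ((T - s) • A) i k :=
    exp_apply_nonneg fun i k => mul_nonneg (sub_nonneg.2 hs.2.le) (hA i k)
  exact sub_nonpos.2 (dotProduct_le_dotProduct_of_nonneg_left (hineq s hs) (hexp j))

end Matrix

theorem stmt_15_general {n : ℕ} (A : Matrix (Fin n) (Fin n) ℝ) (hA : ∀ i j, 0 ≤ A i j)
    (x x' : ℝ → Fin n → ℝ)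
    (hderiv : ∀ j t, HasDerivAt (fun s => x s j) (x' t j) t)
    (hineq : ∀ t ≥ 0, ∀ j, x' t j ≤ (A *ᵥ x t) j) :
    ∀ t ≥ 0, ∀ j, x t j ≤ (NormedSpace.exp (t • A) *ᵥ x 0) j := by
  intro T hT j
  have hg := antitoneOn_exp_sub_smul_mulVec_apply hA hderiv (fun t ht => hineq t ht.1.le) j
    (Set.left_mem_Icc.2 hT) (Set.right_mem_Icc.2 hT) hT
  simpa using hg

/-- Vector-valued comparison principle: if `A` is entrywise nonnegative and the `C¹`
function `x` satisfies `x(t) ≥ 0` and `x'(t) ≤ A x(t)` entrywise for all `t ≥ 0`,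
then `x(t) ≤ e^{t A} x(0)` entrywise for all `t ≥ 0`. -/
theorem stmt_15 {n : ℕ} (A : Matrix (Fin n) (Fin n) ℝ) (hA : ∀ i j, 0 ≤ A i j)
    (x x' : ℝ → Fin n → ℝ)
    (hderiv : ∀ j t, HasDerivAt (fun s => x s j) (x' t j) t)
    (hcont : ∀ j, Continuous fun t => x' t j)
    (hpos : ∀ t ≥ 0, ∀ j, 0 ≤ x t j)
    (hineq : ∀ t ≥ 0, ∀ j, x' t j ≤ (A *ᵥ x t) j) :
    ∀ t ≥ 0, ∀ j, x t j ≤ (NormedSpace.exp (t • A) *ᵥ x 0) j :=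
  stmt_15_general A hA x x' hderiv hineq
end

section
/- Let A be the adjacency matrix of a finite graph with max degree D, R a set of vertices, and x(t) = e^{τt(DI + A)} x(0) with x(0) ≥ 0 supported on R, Σ_i x_i(0) = N₀. Then for any vertex j with dist(j,R) ≥ l and any t ≥ 0: x_j(t) ≤ N₀ e^{τtD} (e^{τtD} − Σ_{m<l} (τtD)^m/m!) ≤ N₀ e^{τtD} e^{τtD} (τtD)^l / l!. -/
/-!
Since `D • 1` commutes with `A`, `exp (c • (D • 1 + A)) = e^{cD} • exp (c • A)` with `c = τ t`.
The `(j, i)` entry of `exp (c • A)` is `∑ₘ cᵐ (Aᵐ)ⱼᵢ / m!`, and `(Aᵐ)ⱼᵢ` counts walks of length `m`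
from `j` to `i`: it vanishes for `m < dist j i` and is at most `Dᵐ`. So for `i ∈ R` the entry is
bounded by the tail `∑_{m ≥ l} (cD)ᵐ / m!` of the exponential series, which is at most
`e^{cD} (cD)ˡ / l!` because `l! m! ≤ (l + m)!`. Pairing with `x(0) ≥ 0` gives the factor `N₀`.
-/

open Matrix

namespace Matrix

variable {ι : Type*} [Fintype ι] [DecidableEq ι]

theorem exp_smul_one (r : ℝ) : NormedSpace.exp (r • (1 : Matrix ι ι ℝ)) = Real.exp r • 1 := by
  rw [smul_one_eq_diagonal, exp_diagonal, Pi.exp_def, ← Real.exp_eq_exp_ℝ, ← smul_one_eq_diagonal]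

theorem hasSum_exp_apply (M : Matrix ι ι ℝ) (j i : ι) :
    HasSum (fun m : ℕ => (M ^ m) j i / m.factorial) (NormedSpace.exp M j i) := by
  simp_rw [div_eq_inv_mul]
  open scoped Norms.Operator in
  exact Pi.hasSum.mp (Pi.hasSum.mp (NormedSpace.exp_series_hasSum_exp' (𝕂 := ℝ) M) j) i

theorem exp_smul_one_add (r : ℝ) (A : Matrix ι ι ℝ) :
    NormedSpace.exp (r • 1 + A) = Real.exp r • NormedSpace.exp A := by
  rw [exp_add_of_commute _ _ ((Commute.one_left A).smul_left r), exp_smul_one, smul_one_mul]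

end Matrix

theorem Matrix.mulVec_apply_le_mul_sum {ι κ : Type*} [Fintype ι] {M : Matrix κ ι ℝ}
    {x : ι → ℝ} {R : Finset ι} {b : ℝ} {j : κ} (hx : ∀ i, 0 ≤ x i)
    (hsupp : ∀ i ∉ R, x i = 0) (hM : ∀ i ∈ R, M j i ≤ b) :
    (M *ᵥ x) j ≤ b * ∑ i, x i := by
  rw [Matrix.mulVec, dotProduct, Finset.mul_sum]
  refine Finset.sum_le_sum fun i _ => ?_
  by_cases hi : i ∈ R
  · exact mul_le_mul_of_nonneg_right (hM i hi) (hx i)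
  · simp [hsupp i hi]

theorem Real.hasSum_pow_div_factorial (y : ℝ) :
    HasSum (fun m : ℕ => y ^ m / m.factorial) (Real.exp y) :=
  Real.exp_eq_exp_ℝ ▸ NormedSpace.expSeries_div_hasSum_exp y

theorem hasSum_le_sub_sum_range {α : Type*} [AddCommGroup α] [PartialOrder α]
    [IsOrderedAddMonoid α] [TopologicalSpace α] [IsTopologicalAddGroup α] [OrderClosedTopology α]
    {f g : ℕ → α} {a b : α} {l : ℕ} (hf : HasSum f a)
    (hg : HasSum g b) (hfg : ∀ m, f m ≤ g m) (hf_zero : ∀ m < l, f m = 0) :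
    a ≤ b - ∑ m ∈ Finset.range l, g m := by
  have hf_shift : HasSum (fun m => f (m + l)) a := by
    simpa only [Finset.sum_eq_zero fun m hm => hf_zero m (Finset.mem_range.mp hm), sub_zero]
      using (hasSum_nat_add_iff' l).mpr hf
  exact hasSum_le (fun m => hfg (m + l)) hf_shift ((hasSum_nat_add_iff' l).mpr hg)

theorem Real.exp_sub_sum_range_le {y : ℝ} (hy : 0 ≤ y) (l : ℕ) :
    Real.exp y - ∑ m ∈ Finset.range l, y ^ m / m.factorial ≤
      Real.exp y * y ^ l / l.factorial := by
  have hexp := Real.hasSum_pow_div_factorial y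
  have hterm (m : ℕ) :
      y ^ (m + l) / (m + l).factorial ≤ y ^ l / l.factorial * (y ^ m / m.factorial) := by
    rw [div_mul_div_comm, ← pow_add, add_comm l m]
    gcongr
    exact_mod_cast Nat.le_of_dvd (Nat.factorial_pos _)
      (add_comm l m ▸ Nat.factorial_mul_factorial_dvd_factorial_add l m)
  calc _ ≤ y ^ l / l.factorial * Real.exp y :=
        hasSum_le hterm ((hasSum_nat_add_iff' l).mpr hexp) (hexp.mul_left _)
    _ = _ := by ring

namespace SimpleGraph

variable {V : Type*} [Fintype V] [DecidableEq V] (G : SimpleGraph V) [DecidableRel G.Adj]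

theorem adjMatrix_pow_apply_le_maxDegree_pow (m : ℕ) (a b : V) :
    (G.adjMatrix ℝ ^ m) a b ≤ (G.maxDegree : ℝ) ^ m := by
  induction m generalizing a with
  | zero => simp only [pow_zero, one_apply]; split <;> norm_num
  | succ m ih =>
    rw [pow_succ', adjMatrix_mul_apply, pow_succ']
    calc ∑ u ∈ G.neighborFinset a, (G.adjMatrix ℝ ^ m) u b
        ≤ ∑ _u ∈ G.neighborFinset a, (G.maxDegree : ℝ) ^ m := Finset.sum_le_sum fun u _ => ih u
      _ = G.degree a * (G.maxDegree : ℝ) ^ m := by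
          rw [Finset.sum_const, nsmul_eq_mul, card_neighborFinset_eq_degree]
      _ ≤ G.maxDegree * (G.maxDegree : ℝ) ^ m := by gcongr; exact G.degree_le_maxDegree a

theorem adjMatrix_pow_apply_eq_zero_of_lt_dist {m : ℕ} {a b : V} (h : m < G.dist a b) :
    (G.adjMatrix ℝ ^ m) a b = 0 := by
  rw [adjMatrix_pow_apply_eq_card_walk, Nat.cast_eq_zero, Fintype.card_eq_zero_iff]
  exact ⟨fun ⟨p, hp⟩ => (G.dist_le p).not_gt (hp ▸ h)⟩

theorem exp_smul_adjMatrix_apply_le {c : ℝ} (hc : 0 ≤ c) {l : ℕ} {j i : V}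
    (hl : l ≤ G.dist j i) :
    NormedSpace.exp (c • G.adjMatrix ℝ) j i ≤
      Real.exp (c * G.maxDegree) - ∑ m ∈ Finset.range l, (c * G.maxDegree) ^ m / m.factorial := by
  refine hasSum_le_sub_sum_range (Matrix.hasSum_exp_apply _ j i)
    (Real.hasSum_pow_div_factorial _) (fun m => ?_) (fun m hm => ?_)
  · rw [smul_pow, Matrix.smul_apply, smul_eq_mul, mul_pow]
    gcongr
    exact G.adjMatrix_pow_apply_le_maxDegree_pow m j i
  · rw [smul_pow, Matrix.smul_apply, G.adjMatrix_pow_apply_eq_zero_of_lt_dist (hm.trans_le hl),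
      smul_zero, zero_div]

end SimpleGraph

/-- Quantitative light-cone bound: for `x(t) = e^{τ t (D I + A)} x(0)` with `x(0) ≥ 0`
supported on `R` with total mass `N₀`, and `j` at distance at least `l` from `R`,
`x_j(t) ≤ N₀ e^{τtD} (e^{τtD} − Σ_{m<l} (τtD)^m/m!) ≤ N₀ e^{τtD} e^{τtD} (τtD)^l / l!`. -/
theorem stmt_19 {n : ℕ} (G : SimpleGraph (Fin n)) [DecidableRel G.Adj]
    (τ : ℝ) (hτ : 0 < τ)
    (R : Finset (Fin n)) (x0 : Fin n → ℝ) (N₀ : ℝ)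
    (hx0 : ∀ i, 0 ≤ x0 i) (hsupp : ∀ i ∉ R, x0 i = 0) (hmass : ∑ i, x0 i = N₀)
    (j : Fin n) (l : ℕ) (hdist : ∀ i ∈ R, l ≤ G.dist j i)
    (t : ℝ) (ht : 0 ≤ t) :
    (NormedSpace.exp ((τ * t) • ((G.maxDegree : ℝ) • (1 : Matrix (Fin n) (Fin n) ℝ)
        + G.adjMatrix ℝ)) *ᵥ x0) j ≤
        N₀ * Real.exp (τ * t * G.maxDegree) *
          (Real.exp (τ * t * G.maxDegree) -
            ∑ m ∈ Finset.range l, (τ * t * G.maxDegree) ^ m / m.factorial) ∧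
      N₀ * Real.exp (τ * t * G.maxDegree) *
          (Real.exp (τ * t * G.maxDegree) -
            ∑ m ∈ Finset.range l, (τ * t * G.maxDegree) ^ m / m.factorial) ≤
        N₀ * Real.exp (τ * t * G.maxDegree) * Real.exp (τ * t * G.maxDegree) *
          (τ * t * G.maxDegree) ^ l / l.factorial := by
  have hτt : 0 ≤ τ * t := mul_nonneg hτ.le ht
  have hN₀ : 0 ≤ N₀ := hmass ▸ Finset.sum_nonneg fun i _ => hx0 i
  have hentry (i : Fin n) (hi : i ∈ R) := G.exp_smul_adjMatrix_apply_le hτt (hdist i hi)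
  set y := τ * t * G.maxDegree
  set S := ∑ m ∈ Finset.range l, y ^ m / m.factorial
  constructor
  · rw [smul_add, smul_smul, Matrix.exp_smul_one_add, Matrix.smul_mulVec, Pi.smul_apply,
      smul_eq_mul]
    calc Real.exp y * (NormedSpace.exp ((τ * t) • G.adjMatrix ℝ) *ᵥ x0) j
        ≤ Real.exp y * ((Real.exp y - S) * N₀) := by
          gcongr
          exact hmass ▸ Matrix.mulVec_apply_le_mul_sum hx0 hsupp hentry
      _ = N₀ * Real.exp y * (Real.exp y - S) := by ring
  · calc N₀ * Real.exp y * (Real.exp y - S)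
        ≤ N₀ * Real.exp y * (Real.exp y * y ^ l / l.factorial) := by
          gcongr
          exact Real.exp_sub_sum_range_le (by positivity) l
      _ = N₀ * Real.exp y * Real.exp y * y ^ l / l.factorial := by ring
end
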